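/- arXiv:1005.3412 — 2 statements merged into one kernel-verified Lean document; each statement's English description precedes it below -/
import Mathlib

section
/- In the projective plane PG(2,31) over the field with 31 elements, there exists a complete arc consisting of exactly 14 points. -/
/-!
Both halves of completeness reduce to 3 × 3 determinants over `ZMod 31`: no three of the
14 points have vanishing determinant, and every point of the plane, taken with its normalized
representative `(1, y, z)`, `(0, 1, z)` or `(0, 0, 1)`, has vanishing determinant with some two
of them, i.e. lies on a secant. Both are finite checks.
-/

open Projectivization
open scoped LinearAlgebra.Projectivization

instance : Fact (Nat.Prime 31) := ⟨by norm_num⟩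

/-- The point set of the projective plane `PG(2,31)`: the projectivization of the
3-dimensional vector space over the field with 31 elements. -/
abbrev PG31 : Type := Projectivization (ZMod 31) (Fin 3 → ZMod 31)

/-- An arc: a set of points no three of which are collinear, i.e. any three distinct
points of the set have linearly independent representative vectors. -/
def IsArc31 (K : Set PG31) : Prop :=
  ∀ p ∈ K, ∀ q ∈ K, ∀ r ∈ K, p ≠ q → p ≠ r → q ≠ r →
    LinearIndependent (ZMod 31) ![p.rep, q.rep, r.rep]

/-- A complete arc: an arc not contained in a strictly larger arc. -/
def IsCompleteArc31 (K : Set PG31) : Prop :=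
  IsArc31 K ∧ ∀ K' : Set PG31, IsArc31 K' → K ⊆ K' → K' = K

section Det3

variable {K : Type*} [Field K]

/-- The determinant with rows `u, v, w`, expanded so that `decide` can evaluate it. -/
def det3 (u v w : Fin 3 → K) : K :=
  u 0 * (v 1 * w 2 - v 2 * w 1) - u 1 * (v 0 * w 2 - v 2 * w 0) + u 2 * (v 0 * w 1 - v 1 * w 0)

theorem det_of_vec3_eq_det3 (u v w : Fin 3 → K) : (Matrix.of ![u, v, w]).det = det3 u v w := by
  simp [Matrix.det_fin_three, det3]
  ring

theorem linearIndependent_vec3_iff_det3_ne_zero (u v w : Fin 3 → K) :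
    LinearIndependent K ![u, v, w] ↔ det3 u v w ≠ 0 := by
  rw [← det_of_vec3_eq_det3, ← isUnit_iff_ne_zero, ← Matrix.isUnit_iff_isUnit_det]
  exact Matrix.linearIndependent_rows_iff_isUnit

theorem det3_smul (a b c : K) (u v w : Fin 3 → K) :
    det3 (a • u) (b • v) (c • w) = a * b * c * det3 u v w := by
  simp only [det3, Pi.smul_apply, smul_eq_mul]
  ring

theorem det3_smul_self (a : K) (v w : Fin 3 → K) : det3 (a • v) v w = 0 := by
  simp only [det3, Pi.smul_apply, smul_eq_mul]
  ring

theorem linearIndependent_rep_iff_det3_ne_zero {u v w : Fin 3 → K}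
    (hu : u ≠ 0) (hv : v ≠ 0) (hw : w ≠ 0) :
    LinearIndependent K ![(mk K u hu).rep, (mk K v hv).rep, (mk K w hw).rep] ↔
      det3 u v w ≠ 0 := by
  obtain ⟨a, ha⟩ := exists_smul_eq_mk_rep K u hu
  obtain ⟨b, hb⟩ := exists_smul_eq_mk_rep K v hv
  obtain ⟨c, hc⟩ := exists_smul_eq_mk_rep K w hw
  rw [linearIndependent_vec3_iff_det3_ne_zero, ← ha, ← hb, ← hc, Units.smul_def, Units.smul_def,
    Units.smul_def, det3_smul]
  simp [a.ne_zero, b.ne_zero, c.ne_zero]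

theorem mk_ne_mk_of_det3_ne_zero {u v w : Fin 3 → K} (hu : u ≠ 0) (hv : v ≠ 0)
    (h : det3 u v w ≠ 0) : mk K u hu ≠ mk K v hv := by
  rw [ne_eq, mk_eq_mk_iff']
  rintro ⟨a, rfl⟩
  exact h (det3_smul_self a v w)

theorem exists_eq_mk_normalized (p : ℙ K (Fin 3 → K)) :
    ∃ (w : Fin 3 → K) (hw : w ≠ 0), p = mk K w hw ∧
      ((∃ y z, w = ![1, y, z]) ∨ (∃ z, w = ![0, 1, z]) ∨ w = ![0, 0, 1]) := by
  induction p with | h v hv => ?_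
  have hscale : ∀ (i : Fin 3) (w : Fin 3 → K), v i ≠ 0 → v = v i • w →
      ∃ hw : w ≠ 0, mk K v hv = mk K w hw := fun i w hi hvw =>
    have hw : w ≠ 0 := by rintro rfl; exact hv (by simpa using hvw)
    ⟨hw, (mk_eq_mk_iff' K v w hv hw).2 ⟨v i, hvw.symm⟩⟩
  by_cases h0 : v 0 = 0
  · by_cases h1 : v 1 = 0
    · have h2 : v 2 ≠ 0 := fun h2 => hv (by ext i; fin_cases i <;> simp [h0, h1, h2])
      obtain ⟨hw, he⟩ := hscale 2 ![0, 0, 1] h2 (by ext i; fin_cases i <;> simp [h0, h1])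
      exact ⟨_, hw, he, .inr (.inr rfl)⟩
    · obtain ⟨hw, he⟩ := hscale 1 ![0, 1, (v 1)⁻¹ * v 2] h1
        (by ext i; fin_cases i <;> simp [h0, h1])
      exact ⟨_, hw, he, .inr (.inl ⟨_, rfl⟩)⟩
  · obtain ⟨hw, he⟩ := hscale 0 ![1, (v 0)⁻¹ * v 1, (v 0)⁻¹ * v 2] h0
      (by ext i; fin_cases i <;> simp [h0])
    exact ⟨_, hw, he, .inl ⟨_, _, rfl⟩⟩

end Det3

theorem IsArc31.isCompleteArc31 {K : Set PG31} (hK : IsArc31 K)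
    (hsecant : ∀ x ∉ K, ∃ p ∈ K, ∃ q ∈ K, p ≠ q ∧
      ¬LinearIndependent (ZMod 31) ![x.rep, p.rep, q.rep]) :
    IsCompleteArc31 K := by
  refine ⟨hK, fun K' hK' hsub => Set.Subset.antisymm (fun x hx => ?_) hsub⟩
  by_contra hxK
  obtain ⟨p, hp, q, hq, hpq, hdep⟩ := hsecant x hxK
  exact hdep (hK' x hx p (hsub hp) q (hsub hq) (ne_of_mem_of_not_mem hp hxK).symm
    (ne_of_mem_of_not_mem hq hxK).symm hpq)

namespace Arc14

def pts : Fin 14 → Fin 3 → ZMod 31 :=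
  ![![1, 13, 23], ![1, 24, 7], ![1, 28, 18], ![1, 4, 10], ![0, 1, 4], ![0, 1, 23], ![1, 17, 9],
    ![1, 10, 22], ![1, 26, 11], ![1, 8, 15], ![1, 11, 28], ![1, 12, 27], ![1, 14, 17], ![1, 17, 27]]

theorem pts_ne_zero : ∀ k, pts k ≠ 0 := by decide

theorem det3_pts_ne_zero : ∀ a b c : Fin 14, a ≠ b → a ≠ c → b ≠ c →
    det3 (pts a) (pts b) (pts c) ≠ 0 := by decide

def IsOnSecant (w : Fin 3 → ZMod 31) : Prop :=
  ∃ i j : Fin 14, i ≠ j ∧ det3 w (pts i) (pts j) = 0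

instance : DecidablePred IsOnSecant := fun _ => by unfold IsOnSecant; infer_instance

set_option maxHeartbeats 4000000 in
set_option maxRecDepth 100000 in
theorem isOnSecant_one_y_z : ∀ y z : ZMod 31, IsOnSecant ![1, y, z] := by decide

theorem isOnSecant_zero_one_z : ∀ z : ZMod 31, IsOnSecant ![0, 1, z] := by decide

theorem isOnSecant_zero_zero_one : IsOnSecant ![0, 0, 1] := by decide

noncomputable def point (k : Fin 14) : PG31 := mk (ZMod 31) (pts k) (pts_ne_zero k)

theorem exists_ne_and_ne : ∀ i j : Fin 14, ∃ k, k ≠ i ∧ k ≠ j := by decide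

theorem point_injective : Function.Injective point := by
  intro i j hij
  by_contra hne
  obtain ⟨k, hki, hkj⟩ := exists_ne_and_ne i j
  exact mk_ne_mk_of_det3_ne_zero _ _ (det3_pts_ne_zero i j k hne hki.symm hkj.symm) hij

theorem isArc31_range_point : IsArc31 (Set.range point) := by
  rintro _ ⟨a, rfl⟩ _ ⟨b, rfl⟩ _ ⟨c, rfl⟩ hab hac hbc
  exact (linearIndependent_rep_iff_det3_ne_zero _ _ _).2 <| det3_pts_ne_zero a b c
    (ne_of_apply_ne _ hab) (ne_of_apply_ne _ hac) (ne_of_apply_ne _ hbc)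

theorem exists_secant_through (x : PG31) :
    ∃ i j, i ≠ j ∧ ¬LinearIndependent (ZMod 31) ![x.rep, (point i).rep, (point j).rep] := by
  obtain ⟨w, hw, rfl, hnorm⟩ := exists_eq_mk_normalized x
  obtain ⟨i, j, hij, hdet⟩ : IsOnSecant w := by
    rcases hnorm with ⟨y, z, rfl⟩ | ⟨z, rfl⟩ | rfl
    exacts [isOnSecant_one_y_z y z, isOnSecant_zero_one_z z, isOnSecant_zero_zero_one]
  exact ⟨i, j, hij, fun h => (linearIndependent_rep_iff_det3_ne_zero _ _ _).1 h hdet⟩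

end Arc14

open Arc14 in
/-- There exists a complete arc in `PG(2,31)` with exactly 14 points. -/
theorem exists_complete_arc_14_PG2_31 :
    ∃ K : Set PG31, IsCompleteArc31 K ∧ K.ncard = 14 := by
  refine ⟨Set.range point, isArc31_range_point.isCompleteArc31 fun x _ => ?_, ?_⟩
  · obtain ⟨i, j, hij, hdep⟩ := exists_secant_through x
    exact ⟨_, ⟨i, rfl⟩, _, ⟨j, rfl⟩, point_injective.ne hij, hdep⟩
  · rw [← Set.image_univ, Set.ncard_image_of_injective _ point_injective, Set.ncard_univ,
      Nat.card_eq_fintype_card, Fintype.card_fin]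
end

section
/- In the projective plane PG(2,32) over the field with 32 elements, there exists a complete arc consisting of exactly 14 points. -/
open Projectivization

/-- The field with 32 elements. -/
abbrev F32 : Type := GaloisField 2 5

/-- The point set of the projective plane `PG(2,32)`: the projectivization of the
3-dimensional vector space over the field with 32 elements. -/
abbrev PG32 : Type := Projectivization F32 (Fin 3 → F32)

/-- An arc: a set of points no three of which are collinear, i.e. any three distinct
points of the set have linearly independent representative vectors. -/
def IsArc32 (K : Set PG32) : Prop :=
  ∀ p ∈ K, ∀ q ∈ K, ∀ r ∈ K, p ≠ q → p ≠ r → q ≠ r →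
    LinearIndependent F32 ![p.rep, q.rep, r.rep]

/-- A complete arc: an arc not contained in a strictly larger arc. -/
def IsCompleteArc32 (K : Set PG32) : Prop :=
  IsArc32 K ∧ ∀ K' : Set PG32, IsArc32 K' → K ⊆ K' → K' = K

/-!
Fourteen explicit points of `PG(2, 32)` are checked by exhaustive computation in a concrete
model of `GF(32)` (bit vectors multiplied modulo `x ^ 5 + x ^ 2 + 1`), which is then identified
with `GaloisField 2 5` by the uniqueness of finite fields. Three points are collinear iff the
triple product `u ⬝ᵥ v ⨯₃ w` of representatives vanishes, so the arc condition is a list of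
nonzero triple products, and completeness says that each of the `1057` points, taken in a
normalized form, lies on one of the `91` secants.
-/

open Matrix

section TripleProduct

variable {K : Type*} [Field K]

theorem linearIndependent_iff_triple_product_ne_zero (u v w : Fin 3 → K) :
    LinearIndependent K ![u, v, w] ↔ u ⬝ᵥ v ⨯₃ w ≠ 0 := by
  rw [triple_product_eq_det, ← isUnit_iff_ne_zero]
  exact linearIndependent_rows_iff_isUnit.trans (isUnit_iff_isUnit_det (of ![u, v, w]))

theorem smul_triple_product (a b c : K) (u v w : Fin 3 → K) :
    (a • u) ⬝ᵥ (b • v) ⨯₃ (c • w) = a * b * c * (u ⬝ᵥ v ⨯₃ w) := by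
  simp only [map_smul, LinearMap.smul_apply, smul_dotProduct, dotProduct_smul, smul_eq_mul]
  ring

theorem Projectivization.linearIndependent_rep_mk_iff {u v w : Fin 3 → K} (hu : u ≠ 0)
    (hv : v ≠ 0) (hw : w ≠ 0) :
    LinearIndependent K ![(mk K u hu).rep, (mk K v hv).rep, (mk K w hw).rep] ↔
      u ⬝ᵥ v ⨯₃ w ≠ 0 := by
  obtain ⟨a, ha⟩ := exists_smul_eq_mk_rep K u hu
  obtain ⟨b, hb⟩ := exists_smul_eq_mk_rep K v hv
  obtain ⟨c, hc⟩ := exists_smul_eq_mk_rep K w hw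
  rw [← ha, ← hb, ← hc, linearIndependent_iff_triple_product_ne_zero, Units.smul_def,
    Units.smul_def, Units.smul_def, smul_triple_product]
  simp

theorem exists_eq_smul_normalForm {w : Fin 3 → K} (hw : w ≠ 0) :
    ∃ (a : K) (u : Fin 3 → K),
      ((∃ b c, u = ![1, b, c]) ∨ (∃ c, u = ![0, 1, c]) ∨ u = ![0, 0, 1]) ∧ w = a • u := by
  by_cases h0 : w 0 = 0
  · by_cases h1 : w 1 = 0
    · have h2 : w 2 ≠ 0 := fun h2 => hw (by ext i; fin_cases i <;> assumption)
      refine ⟨w 2, _, Or.inr (Or.inr rfl), ?_⟩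
      ext i; fin_cases i <;> simp [h0, h1]
    · refine ⟨w 1, _, Or.inr (Or.inl ⟨(w 1)⁻¹ * w 2, rfl⟩), ?_⟩
      ext i; fin_cases i <;> simp [h0, mul_inv_cancel_left₀ h1]
  · refine ⟨w 0, _, Or.inl ⟨(w 0)⁻¹ * w 1, (w 0)⁻¹ * w 2, rfl⟩, ?_⟩
    ext i; fin_cases i <;> simp [mul_inv_cancel_left₀ h0]

end TripleProduct

section RingHom

variable {R S : Type*} [CommRing R] [CommRing S] (σ : R →+* S)

theorem RingHom.comp_crossProduct (u v : Fin 3 → R) : σ ∘ (u ⨯₃ v) = (σ ∘ u) ⨯₃ (σ ∘ v) := by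
  ext i; fin_cases i <;> simp [cross_apply]

theorem RingHom.map_triple_product (u v w : Fin 3 → R) :
    σ (u ⬝ᵥ v ⨯₃ w) = (σ ∘ u) ⬝ᵥ (σ ∘ v) ⨯₃ (σ ∘ w) := by
  rw [σ.map_dotProduct, σ.comp_crossProduct]

end RingHom

section Criterion

variable {ι : Type*} (v : ι → Fin 3 → F32) (hv : ∀ i, v i ≠ 0)

theorem mk_injective_of_crossProduct_ne_zero (hdistinct : ∀ i j, i ≠ j → v i ⨯₃ v j ≠ 0) :
    Function.Injective fun i => mk F32 (v i) (hv i) := fun i j hij => by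
  by_contra hne
  exact hdistinct i j hne ((mk_eq_mk_iff_crossProduct_eq_zero _ _).1 hij)

theorem isArc32_range_mk
    (harc : ∀ i j k, i ≠ j → i ≠ k → j ≠ k → v i ⬝ᵥ v j ⨯₃ v k ≠ 0) :
    IsArc32 (Set.range fun i => mk F32 (v i) (hv i)) := by
  rintro _ ⟨i, rfl⟩ _ ⟨j, rfl⟩ _ ⟨k, rfl⟩ hij hik hjk
  rw [linearIndependent_rep_mk_iff]
  refine harc i j k ?_ ?_ ?_ <;> rintro rfl <;> contradiction

theorem isCompleteArc32_range_mk (hdistinct : ∀ i j, i ≠ j → v i ⨯₃ v j ≠ 0)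
    (harc : ∀ i j k, i ≠ j → i ≠ k → j ≠ k → v i ⬝ᵥ v j ⨯₃ v k ≠ 0)
    (hcover : ∀ w ≠ 0, ∃ i j, i ≠ j ∧ w ⬝ᵥ v i ⨯₃ v j = 0) :
    IsCompleteArc32 (Set.range fun i => mk F32 (v i) (hv i)) := by
  refine ⟨isArc32_range_mk v hv harc, fun K' hK' hsub => hsub.antisymm' fun x hx => ?_⟩
  obtain ⟨i, j, hij, hx_on⟩ := hcover x.rep x.rep_nonzero
  by_contra hxK
  have hxi : x ≠ mk F32 (v i) (hv i) := fun h => hxK ⟨i, h.symm⟩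
  have hxj : x ≠ mk F32 (v j) (hv j) := fun h => hxK ⟨j, h.symm⟩
  have := hK' x hx _ (hsub ⟨i, rfl⟩) _ (hsub ⟨j, rfl⟩) hxi hxj
    ((mk_injective_of_crossProduct_ne_zero v hv hdistinct).ne hij)
  rw [← mk_rep x, linearIndependent_rep_mk_iff] at this
  exact this hx_on

end Criterion

theorem exists_isCompleteArc32_ncard_of_ringEquiv {K ι : Type*} [Field K] (e : K ≃+* F32)
    (v : ι → Fin 3 → K) (hv : ∀ i, v i ≠ 0) (hdistinct : ∀ i j, i ≠ j → v i ⨯₃ v j ≠ 0)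
    (harc : ∀ i j k, i ≠ j → i ≠ k → j ≠ k → v i ⬝ᵥ v j ⨯₃ v k ≠ 0)
    (hcover : ∀ w ≠ 0, ∃ i j, i ≠ j ∧ w ⬝ᵥ v i ⨯₃ v j = 0) :
    ∃ S : Set PG32, IsCompleteArc32 S ∧ S.ncard = Nat.card ι := by
  let σ : K →+* F32 := e
  let v' i : Fin 3 → F32 := σ ∘ v i
  have hv' i : v' i ≠ 0 := by
    simpa [v'] using σ.injective.comp_left.ne (hv i)
  have hdistinct' i j (hij : i ≠ j) : v' i ⨯₃ v' j ≠ 0 := by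
    simpa [v', ← σ.comp_crossProduct] using σ.injective.comp_left.ne (hdistinct i j hij)
  have harc' i j k (hij : i ≠ j) (hik : i ≠ k) (hjk : j ≠ k) : v' i ⬝ᵥ v' j ⨯₃ v' k ≠ 0 := by
    simpa [v', ← σ.map_triple_product] using harc i j k hij hik hjk
  have hcover' (w : Fin 3 → F32) (hw : w ≠ 0) : ∃ i j, i ≠ j ∧ w ⬝ᵥ v' i ⨯₃ v' j = 0 := by
    have hw' : e.symm ∘ w ≠ 0 := fun h => hw (funext fun k => by simpa using congrFun h k)
    obtain ⟨i, j, hij, h⟩ := hcover _ hw'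
    have hσ : σ ∘ (e.symm ∘ w) = w := funext fun k => by simp [σ]
    refine ⟨i, j, hij, ?_⟩
    rw [← hσ, ← σ.map_triple_product, h, map_zero]
  refine ⟨_, isCompleteArc32_range_mk v' hv' hdistinct' harc' hcover', ?_⟩
  exact Set.ncard_range_of_injective (mk_injective_of_crossProduct_ne_zero v' hv' hdistinct')

/-- Polynomials of degree `< 5` over `GF(2)` modulo the irreducible `x ^ 5 + x ^ 2 + 1`, a
polynomial being encoded by the natural number whose binary digits are its coefficients. -/
def GF32 : Type := Fin 32

namespace GF32

instance : DecidableEq GF32 := inferInstanceAs (DecidableEq (Fin 32))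

instance : Fintype GF32 := inferInstanceAs (Fintype (Fin 32))

def ofBits (n : ℕ) : GF32 := ⟨n % 32, Nat.mod_lt _ (by norm_num)⟩

/-- Multiplication by `x` of a polynomial of degree `< 5`: `a / 16` is the coefficient of `x ^ 4`,
and `x ^ 5` is replaced by `x ^ 2 + 1` by xoring with `37 = 0b100101`. -/
def mulXBits (a : ℕ) : ℕ := 2 * a ^^^ 37 * (a / 16)

def mulBits (a b : ℕ) : ℕ :=
  let a1 := mulXBits a
  let a2 := mulXBits a1
  let a3 := mulXBits a2
  let a4 := mulXBits a3
  a * (b % 2) ^^^ a1 * (b / 2 % 2) ^^^ a2 * (b / 4 % 2) ^^^ a3 * (b / 8 % 2) ^^^ a4 * (b / 16 % 2)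

instance : Zero GF32 := ⟨ofBits 0⟩

instance : One GF32 := ⟨ofBits 1⟩

instance : Add GF32 := ⟨fun a b => ofBits (a.val ^^^ b.val)⟩

instance : Neg GF32 := ⟨id⟩

instance : Mul GF32 := ⟨fun a b => ofBits (mulBits a.val b.val)⟩

theorem mul_comm' : ∀ a b : GF32, a * b = b * a := by decide +kernel

theorem left_distrib' : ∀ a b c : GF32, a * (b + c) = a * b + a * c := by decide +kernel

instance : CommRing GF32 where
  add_assoc := by decide +kernel
  zero_add := by decide +kernel
  add_zero := by decide +kernel
  add_comm := by decide +kernel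
  neg_add_cancel := by decide +kernel
  mul_assoc := by decide +kernel
  one_mul := by decide +kernel
  mul_one := by decide +kernel
  zero_mul := by decide +kernel
  mul_zero := by decide +kernel
  mul_comm := mul_comm'
  left_distrib := left_distrib'
  right_distrib a b c := by rw [mul_comm', left_distrib', mul_comm' a, mul_comm' b]
  nsmul := nsmulRec
  zsmul := zsmulRec

instance : Nontrivial GF32 := ⟨⟨0, 1, by decide⟩⟩

instance : NoZeroDivisors GF32 where
  eq_zero_or_eq_zero_of_mul_eq_zero := by decide +kernel

instance : IsDomain GF32 := NoZeroDivisors.to_isDomain _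

/-- Inverses are never computed: a finite integral domain is a field. -/
noncomputable instance : Field GF32 := Fintype.fieldOfDomain GF32

instance : CharP GF32 2 := CharTwo.of_one_ne_zero_of_two_eq_zero one_ne_zero (by decide)

noncomputable instance : Algebra (ZMod 2) GF32 := ZMod.algebra _ 2

theorem natCard_eq : Nat.card GF32 = 2 ^ 5 := by
  simp [Nat.card_eq_fintype_card, GF32]

noncomputable def ringEquivF32 : GF32 ≃+* F32 :=
  (GaloisField.algEquivGaloisField 2 5 natCard_eq).toRingEquiv

def arcBits : Fin 14 → Fin 3 → ℕ :=
  ![![1, 12, 12], ![1, 21, 27], ![1, 14, 13], ![1, 30, 10], ![1, 19, 0], ![1, 7, 21], ![1, 24, 20],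
    ![1, 10, 17], ![0, 1, 13], ![0, 1, 11], ![1, 17, 1], ![1, 9, 7], ![1, 25, 27], ![1, 10, 10]]

def arc (i : Fin 14) : Fin 3 → GF32 := fun k => ofBits (arcBits i k)

theorem arc_ne_zero : ∀ i, arc i ≠ 0 := by decide +kernel

theorem arc_crossProduct_ne_zero : ∀ i j, i ≠ j → arc i ⨯₃ arc j ≠ 0 := by decide +kernel

theorem arc_triple_product_ne_zero :
    ∀ i j k, i ≠ j → i ≠ k → j ≠ k → arc i ⬝ᵥ arc j ⨯₃ arc k ≠ 0 := by
  decide +kernel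

theorem exists_secant_through {w : Fin 3 → GF32} (hw : w ≠ 0) :
    ∃ i j, i ≠ j ∧ w ⬝ᵥ arc i ⨯₃ arc j = 0 := by
  obtain ⟨a, u, hu, rfl⟩ := exists_eq_smul_normalForm hw
  clear hw
  suffices ∃ i j, i ≠ j ∧ u ⬝ᵥ arc i ⨯₃ arc j = 0 by
    obtain ⟨i, j, hij, h⟩ := this
    exact ⟨i, j, hij, by rw [smul_dotProduct, h, smul_zero]⟩
  -- `vec3_dotProduct` replaces the `Finset.sum` in `⬝ᵥ`, which is slow to evaluate in the kernel.
  rcases hu with ⟨b, c, rfl⟩ | ⟨c, rfl⟩ | rfl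
  · revert b c
    simp only [vec3_dotProduct]
    decide +kernel
  · revert c
    simp only [vec3_dotProduct]
    decide +kernel
  · simp only [vec3_dotProduct]
    decide +kernel

end GF32

/-- There exists a complete arc in `PG(2,32)` with exactly 14 points. -/
theorem exists_complete_arc_14_PG2_32 :
    ∃ K : Set PG32, IsCompleteArc32 K ∧ K.ncard = 14 := by
  simpa using exists_isCompleteArc32_ncard_of_ringEquiv GF32.ringEquivF32 GF32.arc
    GF32.arc_ne_zero GF32.arc_crossProduct_ne_zero GF32.arc_triple_product_ne_zero
    fun _ => GF32.exists_secant_through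
end
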